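/- Let δ > 0 and suppose that for each k ≥ 1, |Φ^{(k)}_t(x,y)| ≤ (C₁ Γ(δ))^k C₂^{k-1} Γ(kδ)^{-1} t^{kδ-1} H_t(x,y) with C₁, C₂ > 0 and H_t(x,y) ≥ 0. Then the series Ψ_t(x,y) = Σ_{k≥1} Φ^{(k)}_t(x,y) converges absolutely for every t ∈ (0,T], x, y ∈ ℝ^d, and there is a constant C_Ψ (depending on C₁, C₂, δ, T) such that |Ψ_t(x,y)| ≤ C_Ψ t^{δ-1} H_t(x,y). -/

import Mathlib

/-!
Bounding `t ^ ((k + 1) * δ - 1)` by `(T ^ δ) ^ k * t ^ (δ - 1)` dominates `|Φ⁽ᵏ⁺¹⁾_t(x, y)|` by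
`u k * t ^ (δ - 1) * H_t(x, y)`, where `u k = C₁Γ(δ) * (C₁Γ(δ)C₂T^δ) ^ k / Γ(kδ + δ)` are the
coefficients of a Mittag-Leffler series. That series converges by the ratio test, because
log-convexity of `Γ` gives `Γ(x) / Γ(x + δ) ≤ (x + a - 1) ^ (-a) → 0` for `a = min δ (1/2)`.
Then `C_Ψ = ∑ u k` works.
-/

open Real Filter Topology

namespace Real

/-- Log-convexity of `Γ` between `x + a - 1` and `x + a`, combined with `Γ(s + 1) = s Γ(s)`. -/
lemma Gamma_le_Gamma_add_mul_rpow_neg {x a : ℝ} (ha₀ : 0 < a) (ha₁ : a < 1) (hx : 1 - a < x) :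
    Gamma x ≤ Gamma (x + a) * (x + a - 1) ^ (-a) := by
  have hs : 0 < x + a - 1 := by linarith
  have hΓ : 0 < Gamma (x + a) := Gamma_pos_of_pos (by linarith)
  have hrec : Gamma (x + a - 1) = Gamma (x + a) / (x + a - 1) := by
    rw [eq_div_iff hs.ne', mul_comm, ← Gamma_add_one hs.ne', sub_add_cancel]
  calc Gamma x = Gamma (a * (x + a - 1) + (1 - a) * (x + a)) := by ring_nf
    _ ≤ Gamma (x + a - 1) ^ a * Gamma (x + a) ^ (1 - a) :=
      Gamma_mul_add_mul_le_rpow_Gamma_mul_rpow_Gamma hs (by linarith) ha₀ (by linarith)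
        (by ring)
    _ = Gamma (x + a) * (x + a - 1) ^ (-a) := by
      rw [hrec, div_rpow hΓ.le hs.le, rpow_neg hs.le, div_eq_mul_inv, mul_right_comm,
        ← rpow_add hΓ, add_sub_cancel, rpow_one]

lemma tendsto_Gamma_div_Gamma_add_atTop {δ : ℝ} (hδ : 0 < δ) :
    Tendsto (fun x => Gamma x / Gamma (x + δ)) atTop (𝓝 0) := by
  set a := min δ (1 / 2)
  have ha₀ : 0 < a := lt_min hδ one_half_pos
  have ha₁ : a < 1 := (min_le_right _ _).trans_lt one_half_lt_one
  have hupper : Tendsto (fun x : ℝ => (x + a - 1) ^ (-a)) atTop (𝓝 0) :=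
    (tendsto_rpow_neg_atTop ha₀).comp (tendsto_atTop_add_const_right _ _ <|
      tendsto_atTop_add_const_right _ _ tendsto_id)
  refine squeeze_zero' ?_ ?_ hupper
  · filter_upwards [eventually_gt_atTop 0] with x hx
    have : 0 < x + δ := by linarith
    positivity
  · filter_upwards [eventually_ge_atTop 2] with x hx
    have hΓ : 0 < Gamma (x + δ) := Gamma_pos_of_pos (by linarith)
    have hmono : Gamma (x + a) ≤ Gamma (x + δ) :=
      Gamma_strictMonoOn_Ici.monotoneOn (by simp only [Set.mem_Ici]; linarith)
        (by simp only [Set.mem_Ici]; linarith) (by simp only [a]; linarith [min_le_left δ (1 / 2)])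
    rw [div_le_iff₀ hΓ]
    calc Gamma x ≤ Gamma (x + a) * (x + a - 1) ^ (-a) :=
          Gamma_le_Gamma_add_mul_rpow_neg ha₀ ha₁ (by linarith)
      _ ≤ Gamma (x + δ) * (x + a - 1) ^ (-a) := by
        gcongr
        exact rpow_nonneg (by linarith) _
      _ = _ := mul_comm _ _

lemma summable_pow_div_Gamma {δ : ℝ} (hδ : 0 < δ) (β c : ℝ) :
    Summable fun k : ℕ => c ^ k / Gamma (k * δ + β) := by
  have hratio : Tendsto (fun k : ℕ => |c| * (Gamma (k * δ + β) / Gamma (k * δ + β + δ)))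
      atTop (𝓝 0) := by
    have hlin : Tendsto (fun k : ℕ => (k : ℝ) * δ + β) atTop atTop :=
      tendsto_atTop_add_const_right _ _ (tendsto_natCast_atTop_atTop.atTop_mul_const hδ)
    simpa using ((tendsto_Gamma_div_Gamma_add_atTop hδ).comp hlin).const_mul |c|
  refine summable_of_ratio_norm_eventually_le one_half_lt_one ?_
  filter_upwards [hratio.eventually (gt_mem_nhds one_half_pos),
    (tendsto_natCast_atTop_atTop.atTop_mul_const hδ).eventually_gt_atTop (-β)] with k hk hpos
  have hΓ : 0 < Gamma (k * δ + β) := Gamma_pos_of_pos (by linarith)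
  have hΓ' : 0 < Gamma (k * δ + β + δ) := Gamma_pos_of_pos (by linarith)
  have hk' : (↑(k + 1) : ℝ) * δ + β = k * δ + β + δ := by push_cast; ring
  calc ‖c ^ (k + 1) / Gamma (↑(k + 1) * δ + β)‖
      = |c| * (Gamma (k * δ + β) / Gamma (k * δ + β + δ)) * ‖c ^ k / Gamma (k * δ + β)‖ := by
        rw [hk', norm_div, norm_div, norm_pow, norm_pow, Real.norm_eq_abs, Real.norm_eq_abs,
          Real.norm_eq_abs, abs_of_pos hΓ, abs_of_pos hΓ', pow_succ]
        field_simp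
    _ ≤ 1 / 2 * ‖c ^ k / Gamma (k * δ + β)‖ := by gcongr

lemma rpow_succ_mul_sub_one_le {t T δ : ℝ} (k : ℕ) (ht : 0 < t) (htT : t ≤ T) (hδ : 0 ≤ δ) :
    t ^ ((k + 1) * δ - 1) ≤ (T ^ δ) ^ k * t ^ (δ - 1) := by
  rw [show ((k : ℝ) + 1) * δ - 1 = δ * k + (δ - 1) by ring, rpow_add ht,
    rpow_mul_natCast ht.le]
  gcongr

end Real

lemma summable_abs_and_abs_tsum_le_of_abs_le {ι : Type*} {f u : ι → ℝ} {B : ℝ}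
    (hu : Summable u) (hf : ∀ i, |f i| ≤ u i * B) :
    Summable (fun i => |f i|) ∧ |∑' i, f i| ≤ (∑' i, u i) * B := by
  have huB : HasSum (fun i => u i * B) ((∑' i, u i) * B) := hu.hasSum.mul_right B
  exact ⟨huB.summable.of_norm_bounded (by simpa using hf), tsum_of_norm_bounded (f := f) huB hf⟩

theorem stmt8 (d : ℕ) (δ T C₁ C₂ : ℝ) (hδ : 0 < δ) (hT : 0 < T)
    (hC₁ : 0 < C₁) (hC₂ : 0 < C₂)
    (Φ : ℕ → ℝ → EuclideanSpace ℝ (Fin d) → EuclideanSpace ℝ (Fin d) → ℝ)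
    (H : ℝ → EuclideanSpace ℝ (Fin d) → EuclideanSpace ℝ (Fin d) → ℝ)
    (hHpos : ∀ t x y, 0 ≤ H t x y)
    (hΦ : ∀ k : ℕ, 1 ≤ k → ∀ t : ℝ, 0 < t → t ≤ T → ∀ x y,
      |Φ k t x y| ≤ (C₁ * Gamma δ) ^ k * C₂ ^ (k - 1) / Gamma (k * δ) *
        t ^ (k * δ - 1) * H t x y) :
    ∃ CΨ > 0, ∀ t : ℝ, 0 < t → t ≤ T → ∀ x y,
      Summable (fun k : ℕ => |Φ (k + 1) t x y|) ∧
      |∑' k : ℕ, Φ (k + 1) t x y| ≤ CΨ * t ^ (δ - 1) * H t x y := by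
  set u : ℕ → ℝ := fun k => C₁ * Gamma δ * (C₁ * Gamma δ * C₂ * T ^ δ) ^ k / Gamma (k * δ + δ)
  have hu : Summable u := by
    simpa only [u, mul_div_assoc] using (summable_pow_div_Gamma hδ δ _).mul_left (C₁ * Gamma δ)
  refine ⟨∑' k, u k, hu.tsum_pos (fun k => by positivity) 0 (by positivity),
    fun t ht htT x y => ?_⟩
  have hbound (k : ℕ) : |Φ (k + 1) t x y| ≤ u k * (t ^ (δ - 1) * H t x y) := by
    have hk := hΦ (k + 1) (Nat.le_add_left 1 k) t ht htT x y
    rw [Nat.add_sub_cancel, Nat.cast_succ] at hk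
    calc |Φ (k + 1) t x y|
        ≤ (C₁ * Gamma δ) ^ (k + 1) * C₂ ^ k / Gamma ((k + 1) * δ) * t ^ ((k + 1) * δ - 1) *
            H t x y := hk
      _ ≤ (C₁ * Gamma δ) ^ (k + 1) * C₂ ^ k / Gamma ((k + 1) * δ) *
            ((T ^ δ) ^ k * t ^ (δ - 1)) * H t x y := by
        have : 0 < Gamma ((k + 1) * δ) := Gamma_pos_of_pos (by positivity)
        gcongr
        · exact hHpos t x y
        · exact rpow_succ_mul_sub_one_le k ht htT hδ.le
      _ = u k * (t ^ (δ - 1) * H t x y) := by simp only [u]; ring_nf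
  simpa only [mul_assoc] using summable_abs_and_abs_tsum_le_of_abs_le hu hbound
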